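/- Fix δ ∈ (0,1) and c₀ > 0, and for each integer k ≥ 2 let R = c₀·ln(k/δ)·√k, D = ⌊k/R⌋, and let Ω_R be the Robust Soliton distribution. Then there exists an integer K₀ such that for all k ≥ K₀, the probability that a node stores no information satisfies Ω′(0) = ∑_{d=1}^{k} (1 − d/k)^k·Ω_R(d) < e^{−2}. -/

import Mathlib

/-- The Ideal Soliton distribution on `{1, …, k}`:
`Ω_I(1) = 1/k` and `Ω_I(d) = 1/(d(d−1))` for `d = 2, …, k`. -/
noncomputable def idealSoliton (k d : ℕ) : ℝ :=
  if d = 1 then 1 / (k : ℝ) else 1 / ((d : ℝ) * ((d : ℝ) - 1))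

/-- The function `τ` from the Robust Soliton construction: with `D = ⌊k/R⌋`,
`τ(d) = R/(dk)` for `1 ≤ d ≤ D−1`, `τ(D) = R·ln(R/δ)/k`, and `τ(d) = 0` for `D < d ≤ k`. -/
noncomputable def tauRS (k : ℕ) (R δ : ℝ) (d : ℕ) : ℝ :=
  if d < ⌊(k : ℝ) / R⌋₊ then R / ((d : ℝ) * (k : ℝ))
  else if d = ⌊(k : ℝ) / R⌋₊ then R * Real.log (R / δ) / (k : ℝ)
  else 0

/-- The normalizing constant `β = ∑_{i=1}^{k} (τ(i) + Ω_I(i))`. -/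
noncomputable def betaRS (k : ℕ) (R δ : ℝ) : ℝ :=
  ∑ i ∈ Finset.Icc 1 k, (tauRS k R δ i + idealSoliton k i)

/-- The Robust Soliton distribution `Ω_R(d) = (τ(d) + Ω_I(d))/β`. -/
noncomputable def robustSoliton (k : ℕ) (R δ : ℝ) (d : ℕ) : ℝ :=
  (tauRS k R δ d + idealSoliton k d) / betaRS k R δ

/-! Since `(1 - d/k)^k ≤ e^{-d}` and `β ≥ ∑ Ω_I = 1`, we get `Ω′(0) ≤ ∑_d e^{-d} (τ(d) + Ω_I(d))`.
Every `τ(d)` is at most `(R/k)(1 + ln(R/δ)) = O(ln² k / √k)` and `∑_{d ≥ 1} e^{-d} ≤ 1`, while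
`Ω_I(1) = 1/k` and `Ω_I(d) ≤ 1/2` for `d ≥ 2` bound the ideal part by
`e^{-1}/k + e^{-2}/(2(1 - e^{-1}))`. This constant is below `e^{-2}` because `e^{-1} < 1/2`,
and all other terms vanish as `k → ∞`. -/

open Finset Real Filter Asymptotics Topology

/-- The paper's `Ω′(0)`. -/
noncomputable def storeNothingProb (k : ℕ) (R δ : ℝ) : ℝ :=
  ∑ d ∈ Icc 1 k, (1 - (d : ℝ) / k) ^ k * robustSoliton k R δ d

lemma geom_sum_Icc_le_of_lt_one {K : Type*} [Field K] [LinearOrder K] [IsStrictOrderedRing K]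
    {x : K} (hx : 0 ≤ x) (h'x : x < 1) (m n : ℕ) :
    ∑ i ∈ Icc m n, x ^ i ≤ x ^ m / (1 - x) := by
  rw [← Finset.Ico_add_one_right_eq_Icc]
  exact geom_sum_Ico_le_of_lt_one hx h'x

lemma sum_exp_neg_one_pow_le_one (k : ℕ) : ∑ d ∈ Icc 1 k, exp (-1) ^ d ≤ 1 := by
  have h := exp_neg_one_lt_half
  calc ∑ d ∈ Icc 1 k, exp (-1) ^ d ≤ exp (-1) ^ 1 / (1 - exp (-1)) :=
        geom_sum_Icc_le_of_lt_one (exp_pos _).le (by linarith) 1 k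
    _ ≤ 1 := by rw [pow_one, div_le_one (by linarith)]; linarith

lemma sum_Ioc_one_div_mul_sub_one {k : ℕ} (hk : 1 ≤ k) :
    ∑ d ∈ Ioc 1 k, 1 / ((d : ℝ) * ((d : ℝ) - 1)) = 1 - 1 / k := by
  induction k, hk using Nat.le_induction with
  | base => simp
  | succ n hn ih =>
    have hn' : (0 : ℝ) < n := by exact_mod_cast hn
    rw [sum_Ioc_succ_top hn, ih]
    push_cast
    field_simp
    ring_nf
    simp [hn'.ne']

lemma idealSoliton_nonneg (k d : ℕ) : 0 ≤ idealSoliton k d := by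
  unfold idealSoliton
  split_ifs
  · positivity
  · rcases d with _ | d
    · simp
    · rw [Nat.cast_succ, add_sub_cancel_right]
      positivity

lemma idealSoliton_le_half (k : ℕ) {d : ℕ} (hd : 2 ≤ d) : idealSoliton k d ≤ 1 / 2 := by
  have hd' : (2 : ℝ) ≤ d := by exact_mod_cast hd
  rw [idealSoliton, if_neg (by omega), div_le_div_iff₀ (by nlinarith) two_pos]
  nlinarith

lemma sum_idealSoliton {k : ℕ} (hk : 1 ≤ k) : ∑ d ∈ Icc 1 k, idealSoliton k d = 1 := by
  have htail : ∑ d ∈ Ioc 1 k, idealSoliton k d = ∑ d ∈ Ioc 1 k, 1 / ((d : ℝ) * ((d : ℝ) - 1)) :=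
    sum_congr rfl fun d hd => if_neg (mem_Ioc.1 hd).1.ne'
  rw [Icc_eq_cons_Ioc hk, sum_cons, htail, sum_Ioc_one_div_mul_sub_one hk, idealSoliton,
    if_pos rfl]
  ring

section Tau

variable {R δ : ℝ}

lemma tauRS_nonneg (k d : ℕ) (hδ : 0 < δ) (hδR : δ ≤ R) : 0 ≤ tauRS k R δ d := by
  have hR : 0 ≤ R := hδ.le.trans hδR
  have hL : 0 ≤ log (R / δ) := log_nonneg ((one_le_div hδ).2 hδR)
  unfold tauRS
  split_ifs <;> positivity

lemma tauRS_le {k d : ℕ} (hd : 1 ≤ d) (hδ : 0 < δ) (hδR : δ ≤ R) :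
    tauRS k R δ d ≤ R / k * (1 + log (R / δ)) := by
  have hR : 0 ≤ R := hδ.le.trans hδR
  have hL : 0 ≤ log (R / δ) := log_nonneg ((one_le_div hδ).2 hδR)
  have hd' : (1 : ℝ) ≤ d := by exact_mod_cast hd
  unfold tauRS
  split_ifs
  · rw [div_mul_eq_div_div_swap]
    exact (div_le_self (by positivity) hd').trans (le_mul_of_one_le_right (by positivity)
      (by linarith))
  · rw [mul_div_right_comm]
    exact mul_le_mul_of_nonneg_left (by linarith) (by positivity)
  · positivity

lemma one_le_betaRS {k : ℕ} (hk : 1 ≤ k) (hδ : 0 < δ) (hδR : δ ≤ R) : 1 ≤ betaRS k R δ :=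
  calc 1 = ∑ d ∈ Icc 1 k, idealSoliton k d := (sum_idealSoliton hk).symm
    _ ≤ betaRS k R δ := sum_le_sum fun d _ => le_add_of_nonneg_left (tauRS_nonneg k d hδ hδR)

lemma sum_exp_neg_one_pow_mul_tauRS_le (k : ℕ) (hδ : 0 < δ) (hδR : δ ≤ R) :
    ∑ d ∈ Icc 1 k, exp (-1) ^ d * tauRS k R δ d ≤ R / k * (1 + log (R / δ)) := by
  have hR : 0 ≤ R := hδ.le.trans hδR
  have hL : 0 ≤ log (R / δ) := log_nonneg ((one_le_div hδ).2 hδR)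
  calc ∑ d ∈ Icc 1 k, exp (-1) ^ d * tauRS k R δ d
      ≤ ∑ d ∈ Icc 1 k, exp (-1) ^ d * (R / k * (1 + log (R / δ))) :=
        sum_le_sum fun d hd =>
          mul_le_mul_of_nonneg_left (tauRS_le (mem_Icc.1 hd).1 hδ hδR) (by positivity)
    _ = (∑ d ∈ Icc 1 k, exp (-1) ^ d) * (R / k * (1 + log (R / δ))) := (sum_mul ..).symm
    _ ≤ R / k * (1 + log (R / δ)) :=
        mul_le_of_le_one_left (by positivity) (sum_exp_neg_one_pow_le_one k)

end Tau

lemma sum_exp_neg_one_pow_mul_idealSoliton_le {k : ℕ} (hk : 1 ≤ k) :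
    ∑ d ∈ Icc 1 k, exp (-1) ^ d * idealSoliton k d
      ≤ exp (-1) / k + exp (-2) / (2 * (1 - exp (-1))) := by
  have h := exp_neg_one_lt_half
  have htail : ∑ d ∈ Icc 2 k, exp (-1) ^ d * idealSoliton k d
      ≤ exp (-2) / (2 * (1 - exp (-1))) :=
    calc ∑ d ∈ Icc 2 k, exp (-1) ^ d * idealSoliton k d
        ≤ ∑ d ∈ Icc 2 k, exp (-1) ^ d * (1 / 2) := sum_le_sum fun d hd =>
          mul_le_mul_of_nonneg_left (idealSoliton_le_half k (mem_Icc.1 hd).1) (by positivity)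
      _ = (∑ d ∈ Icc 2 k, exp (-1) ^ d) / 2 := by rw [← sum_mul]; ring
      _ ≤ exp (-1) ^ 2 / (1 - exp (-1)) / 2 := by
          gcongr
          exact geom_sum_Icc_le_of_lt_one (exp_pos _).le (by linarith) 2 k
      _ = exp (-2) / (2 * (1 - exp (-1))) := by
          rw [← exp_nat_mul, div_div, mul_comm (1 - _)]
          norm_num
  rw [Icc_eq_cons_Ioc hk, sum_cons, ← Icc_add_one_left_eq_Ioc, pow_one, idealSoliton, if_pos rfl,
    mul_one_div]
  exact add_le_add_right htail _

lemma storeNothingProb_le {k : ℕ} {R δ : ℝ} (hk : 1 ≤ k) (hδ : 0 < δ) (hδR : δ ≤ R) :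
    storeNothingProb k R δ
      ≤ R / k * (1 + log (R / δ)) + exp (-1) / k + exp (-2) / (2 * (1 - exp (-1))) := by
  have hβ := one_le_betaRS hk hδ hδR
  have hterm : ∀ d ∈ Icc 1 k, (1 - (d : ℝ) / k) ^ k * robustSoliton k R δ d
      ≤ exp (-1) ^ d * tauRS k R δ d + exp (-1) ^ d * idealSoliton k d := by
    intro d hd
    have hdk : (d : ℝ) ≤ k := by exact_mod_cast (mem_Icc.1 hd).2
    have hnum := add_nonneg (tauRS_nonneg k d hδ hδR) (idealSoliton_nonneg k d)
    rw [← mul_add, ← exp_nat_mul, mul_neg_one]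
    exact mul_le_mul (one_sub_div_pow_le_exp_neg hdk) (div_le_self hnum hβ)
      (div_nonneg hnum (by linarith)) (exp_pos _).le
  calc storeNothingProb k R δ
      ≤ ∑ d ∈ Icc 1 k, (exp (-1) ^ d * tauRS k R δ d + exp (-1) ^ d * idealSoliton k d) :=
        sum_le_sum hterm
    _ ≤ _ := by
      rw [sum_add_distrib]
      linarith [sum_exp_neg_one_pow_mul_tauRS_le k hδ hδR,
        sum_exp_neg_one_pow_mul_idealSoliton_le hk]

lemma isLittleO_const_add_mul_log_rpow (a b : ℝ) {s : ℝ} (hs : 0 < s) :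
    (fun x => a + b * log x) =o[atTop] fun x => x ^ s :=
  (isLittleO_const_left.2 (Or.inr (tendsto_norm_atTop_atTop.comp (tendsto_rpow_atTop hs)))).add
    ((isLittleO_log_rpow_atTop hs).const_mul_left b)

lemma tendsto_mul_log_div_sqrt (a b c d : ℝ) :
    Tendsto (fun x => (a + b * log x) * (c + d * log x) / √x) atTop (𝓝 0) := by
  have h := ((isLittleO_const_add_mul_log_rpow a b (s := 1 / 4) (by norm_num)).mul
    (isLittleO_const_add_mul_log_rpow c d (s := 1 / 4) (by norm_num))).tendsto_div_nhds_zero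
  refine h.congr' ((eventually_gt_atTop 0).mono fun x hx => ?_)
  dsimp only
  rw [← rpow_add hx, sqrt_eq_rpow]
  norm_num

lemma log_mul_log_div_mul_sqrt_div_le {c δ x : ℝ} (hc : 0 < c) (hδ : 0 < δ) (hx : 1 ≤ x)
    (hδx : δ < x) : log (c * log (x / δ) * √x / δ) ≤ log (c / δ ^ 2) + 2 * log x := by
  have hx0 : 0 < x := by linarith
  have hL : 0 < log (x / δ) := log_pos ((one_lt_div hδ).2 hδx)
  have hlog : log (x / δ) ≤ x / δ := (log_le_sub_one_of_pos (by positivity)).trans (by linarith)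
  have hR : c * log (x / δ) * √x ≤ c / δ ^ 2 * x ^ 2 * δ :=
    calc c * log (x / δ) * √x ≤ c * (x / δ) * x :=
          mul_le_mul (mul_le_mul_of_nonneg_left hlog hc.le) (sqrt_le_self_iff.2 (Or.inr hx))
            (sqrt_nonneg _) (by positivity)
      _ = c / δ ^ 2 * x ^ 2 * δ := by field_simp
  calc log (c * log (x / δ) * √x / δ) ≤ log (c / δ ^ 2 * x ^ 2) :=
        log_le_log (by positivity) ((div_le_iff₀ hδ).2 hR)
    _ = log (c / δ ^ 2) + 2 * log x := by
        rw [log_mul (by positivity) (by positivity), log_pow]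
        push_cast
        ring

lemma tendsto_mul_log_div_mul_sqrt_atTop {δ c₀ : ℝ} (hδ : 0 < δ) (hc₀ : 0 < c₀) :
    Tendsto (fun k : ℕ => c₀ * log ((k : ℝ) / δ) * √(k : ℝ)) atTop atTop := by
  have h : Tendsto (fun x : ℝ => c₀ * log (x / δ) * √x) atTop atTop :=
    ((tendsto_log_atTop.comp (tendsto_id.atTop_div_const hδ)).const_mul_atTop hc₀).atTop_mul_atTop₀
      tendsto_sqrt_atTop
  exact h.comp tendsto_natCast_atTop_atTop

lemma eventually_storeNothingProb_lt {δ c₀ : ℝ} (hδ : 0 < δ) (hc₀ : 0 < c₀) :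
    ∀ᶠ k : ℕ in atTop, storeNothingProb k (c₀ * log ((k : ℝ) / δ) * √(k : ℝ)) δ < exp (-2) := by
  set tail := exp (-2) / (2 * (1 - exp (-1)))
  have htail : tail < exp (-2) :=
    div_lt_self (exp_pos _) (by linarith [exp_neg_one_lt_half])
  set g : ℝ → ℝ := fun x => (c₀ * -log δ + c₀ * log x) * (1 + log (c₀ / δ ^ 2) + 2 * log x) / √x
    + exp (-1) / x
  have hg : Tendsto g atTop (𝓝 0) := by
    simpa using (tendsto_mul_log_div_sqrt _ _ _ _).add
      (tendsto_const_nhds.div_atTop tendsto_id)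
  filter_upwards [(hg.comp tendsto_natCast_atTop_atTop).eventually (gt_mem_nhds (sub_pos.2 htail)),
    (tendsto_mul_log_div_mul_sqrt_atTop hδ hc₀).eventually_ge_atTop δ,
    tendsto_natCast_atTop_atTop.eventually_gt_atTop δ, eventually_ge_atTop 1] with k hgk hδR hδk hk
  set R := c₀ * log ((k : ℝ) / δ) * √(k : ℝ) with hR
  have hk0 : (0 : ℝ) < k := hδ.trans hδk
  have hk1 : (1 : ℝ) ≤ k := by exact_mod_cast hk
  have hR0 : 0 ≤ R := hδ.le.trans hδR
  have hRk : R / k = (c₀ * -log δ + c₀ * log k) / √k := by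
    rw [hR, log_div hk0.ne' hδ.ne', div_eq_div_iff hk0.ne' (sqrt_pos.2 hk0).ne']
    linear_combination (c₀ * (log k - log δ)) * mul_self_sqrt hk0.le
  have hlogR := log_mul_log_div_mul_sqrt_div_le hc₀ hδ hk1 hδk
  calc storeNothingProb k R δ ≤ R / k * (1 + log (R / δ)) + exp (-1) / k + tail :=
        storeNothingProb_le hk hδ hδR
    _ ≤ R / k * (1 + log (c₀ / δ ^ 2) + 2 * log k) + exp (-1) / k + tail := by
        gcongr R / k * ?_ + _ + _
        linarith
    _ = g k + tail := by rw [hRk]; ring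
    _ < exp (-2) := by linarith [show g k < exp (-2) - tail from hgk]

/-- Fix `δ ∈ (0,1)` and `c₀ > 0`, and for each integer `k ≥ 2` let
`R = c₀·ln(k/δ)·√k`, `D = ⌊k/R⌋`, and let `Ω_R` be the Robust Soliton distribution.
Then there exists an integer `K₀` such that for all `k ≥ K₀`, the probability that a node
stores no information satisfies `Ω′(0) = ∑_{d=1}^{k} (1 − d/k)^k·Ω_R(d) < e^{−2}`. -/
theorem robustSoliton_store_nothing_lt (δ c₀ : ℝ) (hδ : δ ∈ Set.Ioo (0 : ℝ) 1)
    (hc₀ : 0 < c₀) :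
    ∃ K₀ : ℕ, 2 ≤ K₀ ∧ ∀ k : ℕ, K₀ ≤ k →
      ∑ d ∈ Finset.Icc 1 k, (1 - (d : ℝ) / (k : ℝ)) ^ k *
          robustSoliton k (c₀ * Real.log ((k : ℝ) / δ) * Real.sqrt (k : ℝ)) δ d
        < Real.exp (-2) := by
  obtain ⟨K, hK⟩ := eventually_atTop.1 (eventually_storeNothingProb_lt hδ.1 hc₀)
  exact ⟨max K 2, le_max_right K 2, fun k hk => hK k (le_of_max_le_left hk)⟩
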